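/- Let k be a field of characteristic different from 2 and 3, let E be an elliptic curve over k given by a Weierstrass equation with nonzero discriminant, and let P be a k-rational point of E whose order in the group E(k) is exactly 5. Then there exists β ∈ k and an admissible change of Weierstrass variables over k transforming E into the Weierstrass curve W' : y² + (β+1)·x·y + β·y = x³ + β·x² (i.e. with coefficients a1 = β+1, a2 = β, a3 = β, a4 = 0, a6 = 0; necessarily of nonzero discriminant), such that the induced isomorphism of groups of points sends P to the affine point (0, 0) of W'. -/

import Mathlib

namespace WeierstrassCurve.Affine

variable {F : Type*} [Field F] {W : WeierstrassCurve.Affine F}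

private lemma Point.some_eq_some' {x y x' y' : F} (h : W.Nonsingular x y)
    (h' : W.Nonsingular x' y') (hx : x = x') (hy : y = y') : Point.some x y h = Point.some x' y' h' := by
  subst hx hy; rfl

end WeierstrassCurve.Affine

open Classical in
/-- **Lemma**: an elliptic curve over a field of characteristic ≠ 2, 3 with a rational point
`P` of order exactly 5 can be brought, by an admissible change of Weierstrass variables, to
the form `y² + (β+1)·xy + β·y = x³ + β·x²`, in such a way that `P` corresponds to the affine
point `(0,0)` of the new curve (i.e. the coordinates of `P` are `(r, t)`, since the change of
variables is `(x, y) = (u²·x' + r, u³·y' + u²·s·x' + t)`). -/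
theorem stmt5 (k : Type*) [Field k] (hk2 : (2 : k) ≠ 0) (hk3 : (3 : k) ≠ 0)
    (W : WeierstrassCurve.Affine k) (hΔ : W.Δ ≠ 0)
    (P : W.Point) (hP : addOrderOf P = 5) :
    ∃ (β : k),
      ∃ (u : kˣ) (r s t : k),
        (⟨u, r, s, t⟩ : WeierstrassCurve.VariableChange k) • W =
          { a₁ := β + 1, a₂ := β, a₃ := β, a₄ := 0, a₆ := 0 } ∧
        ∃ (h : W.Nonsingular r t), P = WeierstrassCurve.Affine.Point.some r t h := by
  classical
  have hdvd : ∀ n : ℕ, n • P = 0 → (5 : ℕ) ∣ n := fun n hn =>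
    hP ▸ addOrderOf_dvd_of_nsmul_eq_zero hn
  obtain ⟨x₁, y₁, h₁, rfl⟩ : ∃ (x : k) (y : k) (h : W.Nonsingular x y),
      P = WeierstrassCurve.Affine.Point.some _ _ h := by
    cases P with
    | zero => rw [show (WeierstrassCurve.Affine.Point.zero : W.Point) = 0 from rfl,
        addOrderOf_zero] at hP; exact absurd hP (by norm_num)
    | some _ _ h => exact ⟨_, _, h, rfl⟩
  set Q : W.Point := .some _ _ h₁ with hQ
  -- P is not 2-torsion
  have hne2 : y₁ ≠ W.negY x₁ y₁ := by
    intro hy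
    have h2 : (2 : ℕ) • Q = 0 := by
      rw [two_nsmul, hQ, WeierstrassCurve.Affine.Point.add_self_of_Y_eq hy]
    exact absurd (hdvd 2 h2) (by norm_num)
  set L : k := W.slope x₁ x₁ y₁ y₁ with hL
  set x₂ : k := W.addX x₁ x₁ L with hx₂
  set y₂ : k := W.addY x₁ x₁ y₁ L with hy₂
  have h₂ : W.Nonsingular x₂ y₂ := WeierstrassCurve.Affine.nonsingular_add h₁ h₁ fun h => hne2 h.2
  have hPP : Q + Q = .some _ _ h₂ := WeierstrassCurve.Affine.Point.add_self_of_Y_ne hne2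
  -- x₂ ≠ x₁ since 3 • P ≠ 0
  have hx21 : x₂ ≠ x₁ := by
    intro hx
    rcases WeierstrassCurve.Affine.Y_eq_of_X_eq h₂.1 h₁.1 hx with hy | hy
    · have h2 : Q + Q = Q := by
        rw [hPP, hQ]; exact WeierstrassCurve.Affine.Point.some_eq_some' _ _ hx hy
      exact WeierstrassCurve.Affine.Point.some_ne_zero h₁ (right_eq_add.mp h2.symm)
    · have h3 : (3 : ℕ) • Q = 0 := by
        have h0 : Q + Q + Q = 0 := by
          rw [hPP, hQ, WeierstrassCurve.Affine.Point.add_of_Y_eq hx hy]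
        rw [show (3 : ℕ) • Q = Q + Q + Q by abel]
        exact h0
      exact absurd (hdvd 3 h3) (by norm_num)
  set L' : k := W.slope x₂ x₁ y₂ y₁ with hL'
  set x₃ : k := W.addX x₂ x₁ L' with hx₃
  set y₃ : k := W.addY x₂ x₁ y₂ L' with hy₃
  have h₃ : W.Nonsingular x₃ y₃ :=
    WeierstrassCurve.Affine.nonsingular_add h₂ h₁ fun h => (hx21 h.1).elim
  have hQQQ : Q + Q + Q = .some _ _ h₃ := by
    rw [hPP, hQ]; exact WeierstrassCurve.Affine.Point.add_of_X_ne hx21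
  -- 5 • P = 0 gives 3 • P = -(2 • P)
  have h5 : (5 : ℕ) • Q = 0 := hP ▸ addOrderOf_nsmul_eq_zero Q
  have h32 : (WeierstrassCurve.Affine.Point.some _ _ h₃ : W.Point) = - .some _ _ h₂ := by
    rw [← hQQQ, ← hPP, eq_neg_iff_add_eq_zero,
      show Q + Q + Q + (Q + Q) = (5 : ℕ) • Q by abel]
    exact h5
  rw [WeierstrassCurve.Affine.Point.neg_some] at h32
  have hx32 : x₃ = x₂ := by injection h32
  -- now the algebra
  have hE : y₁^2 + W.a₁*x₁*y₁ + W.a₃*y₁ = x₁^3 + W.a₂*x₁^2 + W.a₄*x₁ + W.a₆ :=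
    (WeierstrassCurve.Affine.equation_iff ..).mp h₁.1
  set d : k := 2*y₁ + W.a₁*x₁ + W.a₃ with hd_def
  have hd : d ≠ 0 := by
    intro h
    apply hne2
    rw [WeierstrassCurve.Affine.negY]
    linear_combination h - hd_def
  have hq : x₁ - x₂ ≠ 0 := sub_ne_zero.2 (Ne.symm hx21)
  have hden : y₁ - W.negY x₁ y₁ = d := by
    rw [WeierstrassCurve.Affine.negY]; linear_combination -hd_def
  have hLd : L * d = 3*x₁^2 + 2*W.a₂*x₁ + W.a₄ - W.a₁*y₁ := by
    rw [hL, WeierstrassCurve.Affine.slope_of_Y_ne rfl hne2, hden, div_mul_cancel₀ _ hd]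
  have hx₂e : x₂ = L^2 + W.a₁*L - W.a₂ - 2*x₁ := by
    rw [hx₂, WeierstrassCurve.Affine.addX]; ring
  have hy₂e : y₂ = -(L*(x₂ - x₁) + y₁) - W.a₁*x₂ - W.a₃ := by
    rw [hy₂, WeierstrassCurve.Affine.addY, WeierstrassCurve.Affine.negAddY,
      WeierstrassCurve.Affine.negY, ← hx₂]
  have hL'e : L' * (x₂ - x₁) = y₂ - y₁ := by
    rw [hL', WeierstrassCurve.Affine.slope_of_X_ne hx21, div_mul_cancel₀]
    exact sub_ne_zero.2 hx21
  have e1 : L' * (x₁ - x₂) = d - (L + W.a₁)*(x₁ - x₂) := by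
    linear_combination -hL'e - hy₂e - hd_def
  have hx₃e : x₃ = L'^2 + W.a₁*L' - W.a₂ - x₂ - x₁ := by
    rw [hx₃, WeierstrassCurve.Affine.addX]
  have e2 : (L' - L) * (L' + L + W.a₁) = x₂ - x₁ := by
    linear_combination -hx₃e + hx32 + hx₂e
  have key : (W.a₁ + 2*L)*(x₁-x₂)*d = (x₁-x₂)^3 + d^2 := by
    linear_combination (-(x₁-x₂)^2) * e2 + (L'*(x₁-x₂) + d - L*(x₁-x₂)) * e1
  refine ⟨(x₁-x₂)^3/d^2, Units.mk0 (d/(x₁-x₂)) (div_ne_zero hd hq), x₁, L, y₁, ?_, h₁, rfl⟩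
  have hu : ((Units.mk0 (d/(x₁-x₂)) (div_ne_zero hd hq))⁻¹ : kˣ) =
      Units.mk0 ((x₁-x₂)/d) (div_ne_zero hq hd) := by
    simp [Units.ext_iff, inv_div]
  ext <;> simp only [WeierstrassCurve.variableChange_a₁, WeierstrassCurve.variableChange_a₂,
    WeierstrassCurve.variableChange_a₃, WeierstrassCurve.variableChange_a₄,
    WeierstrassCurve.variableChange_a₆, hu, Units.val_mk0]
  · field_simp
    linear_combination key
  · field_simp
    linear_combination hx₂e
  · field_simp
    linear_combination -hd_def
  · field_simp
    linear_combination -(x₁-x₂)^4*hLd + (x₁-x₂)^4*L*hd_def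
  · field_simp
    linear_combination -(x₁-x₂)^6*hE
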